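/- Let N ≥ 1, let Δx > 0, Δt > 0, m ∈ ℝ, and let p ≥ 2 be an integer. Let φ, ψ, φ', ψ' : ZMod N → ℝ satisfy, for every k ∈ ZMod N: (i) φ'(k) - φ(k) = (Δt/2)(ψ'(k) + ψ(k)); (ii) (ψ'(k) - ψ(k))(φ'(k) - φ(k)) = Δt [ -(m²/2)(φ'(k)² - φ(k)²) - (1/(p+1))(|φ'(k)|^{p+1} - |φ(k)|^{p+1}) + (1/2) · ((φ'+φ)(k+2) - 2(φ'+φ)(k) + (φ'+φ)(k-2))/(4Δx²) · (φ'(k) - φ(k)) ]. Define the discrete total Hamiltonian H^I(u,v) = Δx · Σ_{k ∈ ZMod N} [ (1/2) v(k)² + (m²/2) u(k)² + (1/(p+1)) |u(k)|^{p+1} + (1/2) ((u(k+1) - u(k-1))/(2Δx))² ]. Then H^I(φ', ψ') = H^I(φ, ψ). -/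
import Mathlib


/-- The discrete total Hamiltonian of the Form I scheme (one space dimension,
`N`-periodic grid, flat case `H = 0`). -/
noncomputable def formIHamiltonian (N : ℕ) [NeZero N] (Δx m : ℝ) (p : ℕ)
    (u v : ZMod N → ℝ) : ℝ :=
  Δx * ∑ k : ZMod N,
    ((1 / 2) * v k ^ 2 + (m ^ 2 / 2) * u k ^ 2
      + (1 / ((p : ℝ) + 1)) * |u k| ^ (p + 1)
      + (1 / 2) * ((u (k + 1) - u (k - 1)) / (2 * Δx)) ^ 2)

private lemma zmod_shift {N : ℕ} [NeZero N] (F : ZMod N → ℝ) (c : ZMod N) :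
    ∑ k : ZMod N, F (k + c) = ∑ k : ZMod N, F k :=
  Fintype.sum_equiv (Equiv.addRight c) _ _ (fun _ => rfl)

private lemma zmod_shift_sub {N : ℕ} [NeZero N] (F : ZMod N → ℝ) (c : ZMod N) :
    ∑ k : ZMod N, F (k - c) = ∑ k : ZMod N, F k :=
  Fintype.sum_equiv (Equiv.subRight c) _ _ (fun _ => rfl)

private lemma key_sum {N : ℕ} [NeZero N] (f g : ZMod N → ℝ) :
    ∑ k : ZMod N, ((f (k + 2) - 2 * f k + f (k - 2)) * g k
      + (f (k + 1) - f (k - 1)) * (g (k + 1) - g (k - 1))) = 0 := by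
  have s1 : ∑ k : ZMod N, f (k + 2) * g k = ∑ k : ZMod N, f k * g (k - 2) := by
    rw [← zmod_shift (fun k => f k * g (k - 2)) 2]
    exact Finset.sum_congr rfl fun k _ => by rw [show k + 2 - 2 = k from by ring]
  have s2 : ∑ k : ZMod N, f (k - 2) * g k = ∑ k : ZMod N, f k * g (k + 2) := by
    rw [← zmod_shift_sub (fun k => f k * g (k + 2)) 2]
    exact Finset.sum_congr rfl fun k _ => by rw [show k - 2 + 2 = k from by ring]
  have s3 : ∑ k : ZMod N, f (k + 1) * g (k + 1) = ∑ k : ZMod N, f k * g k :=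
    zmod_shift (fun k => f k * g k) 1
  have s4 : ∑ k : ZMod N, f (k - 1) * g (k - 1) = ∑ k : ZMod N, f k * g k :=
    zmod_shift_sub (fun k => f k * g k) 1
  have s5 : ∑ k : ZMod N, f (k + 1) * g (k - 1) = ∑ k : ZMod N, f (k + 2) * g k := by
    rw [← zmod_shift_sub (fun k => f (k + 2) * g k) 1]
    exact Finset.sum_congr rfl fun k _ => by
      rw [show k - 1 + 2 = k + 1 from by ring]
  have s6 : ∑ k : ZMod N, f (k - 1) * g (k + 1) = ∑ k : ZMod N, f k * g (k + 2) := by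
    rw [← zmod_shift_sub (fun k => f k * g (k + 2)) 1]
    exact Finset.sum_congr rfl fun k _ => by
      rw [show k - 1 + 2 = k + 1 from by ring]
  have expand : ∀ k : ZMod N,
      (f (k + 2) - 2 * f k + f (k - 2)) * g k
        + (f (k + 1) - f (k - 1)) * (g (k + 1) - g (k - 1))
      = (f (k + 2) * g k + f (k - 2) * g k + f (k + 1) * g (k + 1)
          + f (k - 1) * g (k - 1))
        - (2 * (f k * g k) + f (k + 1) * g (k - 1) + f (k - 1) * g (k + 1)) := by
    intro k; ring
  simp only [expand, Finset.sum_sub_distrib, Finset.sum_add_distrib,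
    ← Finset.mul_sum]
  rw [s3, s4, s5, s6, s1, s2]
  ring

/-- Discrete energy conservation of the Form I scheme: one step of the scheme
preserves the discrete total Hamiltonian. -/
theorem formI_energy_conservation (N : ℕ) [NeZero N] (hN : 1 ≤ N)
    (Δx Δt m : ℝ) (hΔx : 0 < Δx) (hΔt : 0 < Δt) (p : ℕ) (hp : 2 ≤ p)
    (φ ψ φ' ψ' : ZMod N → ℝ)
    (h1 : ∀ k : ZMod N, φ' k - φ k = (Δt / 2) * (ψ' k + ψ k))
    (h2 : ∀ k : ZMod N,
      (ψ' k - ψ k) * (φ' k - φ k)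
        = Δt * (-(m ^ 2 / 2) * (φ' k ^ 2 - φ k ^ 2)
            - (1 / ((p : ℝ) + 1)) * (|φ' k| ^ (p + 1) - |φ k| ^ (p + 1))
            + (1 / 2)
              * (((φ' + φ) (k + 2) - 2 * (φ' + φ) k + (φ' + φ) (k - 2)) / (4 * Δx ^ 2))
              * (φ' k - φ k))) :
    formIHamiltonian N Δx m p φ' ψ' = formIHamiltonian N Δx m p φ ψ := by
  have hΔt' : Δt ≠ 0 := hΔt.ne'
  set f : ZMod N → ℝ := fun j => φ' j + φ j with hf
  set g : ZMod N → ℝ := fun j => φ' j - φ j with hg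
  have e4 : ∀ k : ZMod N,
      ((1 / 2) * ψ' k ^ 2 + (m ^ 2 / 2) * φ' k ^ 2
          + (1 / ((p : ℝ) + 1)) * |φ' k| ^ (p + 1)
          + (1 / 2) * ((φ' (k + 1) - φ' (k - 1)) / (2 * Δx)) ^ 2)
        - ((1 / 2) * ψ k ^ 2 + (m ^ 2 / 2) * φ k ^ 2
          + (1 / ((p : ℝ) + 1)) * |φ k| ^ (p + 1)
          + (1 / 2) * ((φ (k + 1) - φ (k - 1)) / (2 * Δx)) ^ 2)
      = (1 / (8 * Δx ^ 2)) * ((f (k + 2) - 2 * f k + f (k - 2)) * g k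
          + (f (k + 1) - f (k - 1)) * (g (k + 1) - g (k - 1))) := by
    intro k
    have e1 := h1 k
    have e2 := h2 k
    simp only [Pi.add_apply] at e2
    have e3 : (1 / 2) * (ψ' k ^ 2 - ψ k ^ 2)
        = -(m ^ 2 / 2) * (φ' k ^ 2 - φ k ^ 2)
          - (1 / ((p : ℝ) + 1)) * (|φ' k| ^ (p + 1) - |φ k| ^ (p + 1))
          + (1 / 2)
            * ((φ' (k + 2) + φ (k + 2) - 2 * (φ' k + φ k)
                + (φ' (k - 2) + φ (k - 2))) / (4 * Δx ^ 2))
            * (φ' k - φ k) := by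
      apply mul_left_cancel₀ hΔt'
      linear_combination e2 - (ψ' k - ψ k) * e1
    simp only [hf, hg]
    linear_combination e3
  unfold formIHamiltonian
  rw [← sub_eq_zero, ← mul_sub, ← Finset.sum_sub_distrib,
    Finset.sum_congr rfl (fun k _ => e4 k), ← Finset.mul_sum, key_sum f g,
    mul_zero, mul_zero]
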